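/- In a qubit system, the four-outcome POVM A = ((1/2)|0⟩⟨0|, (1/2)|1⟩⟨1|, (1/2)|+⟩⟨+|, (1/2)|−⟩⟨−|), with |±⟩ = (|0⟩ ± |1⟩)/√2, satisfies: for any two distinct elements a_x, a_{x'}, range(a_x) ∩ range(a_{x'}) = {0} (hence A is intersubjective), but the coarse-graining ((1/2)|0⟩⟨0| + (1/2)|1⟩⟨1|, (1/2)|+⟩⟨+| + (1/2)|−⟩⟨−|) = (I/2, I/2) is not elementwise sharp, since the positive operator I/4 satisfies I/4 ≤ I/2 for both elements but I/4 ≠ 0. -/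

import Mathlib

/-!
Each element of `A14` is half the projector onto one of four pairwise non-parallel vectors, so
any two of the ranges are distinct lines and meet only in `0`. Both `{|0⟩, |1⟩}` and
`{|+⟩, |−⟩}` are orthonormal bases, hence resolve the identity; so the coarse-graining is
`(I/2, I/2)`, and the nonzero `I/4` lies below both of its effects.
-/

open scoped ComplexOrder

/-- The rank-one operator `|ψ⟩⟨ψ|` for a vector `ψ ∈ ℂ²`. -/
noncomputable def outer (v : Fin 2 → ℂ) : Matrix (Fin 2) (Fin 2) ℂ :=
  Matrix.vecMulVec v (star v)

noncomputable def ketZero : Fin 2 → ℂ := ![1, 0]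
noncomputable def ketOne : Fin 2 → ℂ := ![0, 1]
noncomputable def ketPlus : Fin 2 → ℂ := ![1 / (Real.sqrt 2 : ℂ), 1 / (Real.sqrt 2 : ℂ)]
noncomputable def ketMinus : Fin 2 → ℂ := ![1 / (Real.sqrt 2 : ℂ), -(1 / (Real.sqrt 2 : ℂ))]

/-- The four-outcome qubit POVM `((1/2)|0⟩⟨0|, (1/2)|1⟩⟨1|, (1/2)|+⟩⟨+|, (1/2)|−⟩⟨−|)`. -/
noncomputable def A14 : Fin 4 → Matrix (Fin 2) (Fin 2) ℂ :=
  ![(1 / 2 : ℝ) • outer ketZero, (1 / 2 : ℝ) • outer ketOne,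
    (1 / 2 : ℝ) • outer ketPlus, (1 / 2 : ℝ) • outer ketMinus]

namespace Matrix

variable {m n R : Type*} [Fintype n] [CommSemiring R]

theorem range_mulVecLin_smul_le {S : Type*} [Monoid S] [DistribMulAction S R]
    [IsScalarTower S R R] [SMulCommClass S R R] (c : S) (M : Matrix m n R) :
    LinearMap.range (c • M).mulVecLin ≤ LinearMap.range M.mulVecLin := by
  rintro _ ⟨x, rfl⟩
  exact ⟨c • x, by simp [smul_mulVec]⟩

theorem range_mulVecLin_vecMulVec_le (v w : n → R) :
    LinearMap.range (vecMulVec v w).mulVecLin ≤ Submodule.span R {v} := by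
  rintro _ ⟨x, rfl⟩
  rw [mulVecLin_apply, vecMulVec_mulVec, op_smul_eq_smul]
  exact Submodule.smul_mem _ _ (Submodule.mem_span_singleton_self v)

end Matrix

theorem span_singleton_inf_span_singleton_eq_bot_of_det_ne_zero {K : Type*} [Field K]
    {v w : Fin 2 → K} (h : v 0 * w 1 - v 1 * w 0 ≠ 0) :
    Submodule.span K {v} ⊓ Submodule.span K {w} = ⊥ := by
  have hli : LinearIndependent K ![v, w] :=
    Matrix.linearIndependent_rows_of_det_ne_zero (A := Matrix.of ![v, w]) (by
      simpa [Matrix.det_fin_two] using h)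
  have := hli.disjoint_span_image (s := {0}) (t := {1}) (by simp)
  simpa [Set.image_singleton, disjoint_iff] using this

theorem outer_apply (v : Fin 2 → ℂ) (i j : Fin 2) : outer v i j = v i * star (v j) := rfl

noncomputable def kets : Fin 4 → Fin 2 → ℂ := ![ketZero, ketOne, ketPlus, ketMinus]

theorem A14_eq_smul_outer_kets (i : Fin 4) : A14 i = (1 / 2 : ℝ) • outer (kets i) := by
  fin_cases i <;> rfl

theorem inv_sqrt_two_mul_self : (Real.sqrt 2 : ℂ)⁻¹ * (Real.sqrt 2 : ℂ)⁻¹ = 2⁻¹ := by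
  rw [← mul_inv, ← Complex.ofReal_mul, Real.mul_self_sqrt zero_le_two, Complex.ofReal_ofNat]

theorem kets_det_ne_zero {i j : Fin 4} (hij : i ≠ j) :
    kets i 0 * kets j 1 - kets i 1 * kets j 0 ≠ 0 := by
  fin_cases i <;> fin_cases j <;>
    simp_all [kets, ketZero, ketOne, ketPlus, ketMinus, inv_sqrt_two_mul_self]
  norm_num

theorem outer_ketZero_add_outer_ketOne : outer ketZero + outer ketOne = 1 := by
  ext i j
  fin_cases i <;> fin_cases j <;> simp [Matrix.add_apply, outer_apply, ketZero, ketOne]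

theorem outer_ketPlus_add_outer_ketMinus : outer ketPlus + outer ketMinus = 1 := by
  ext i j
  fin_cases i <;> fin_cases j <;>
    norm_num [Matrix.add_apply, outer_apply, ketPlus, ketMinus, inv_sqrt_two_mul_self]

theorem range_A14_le_span_kets (i : Fin 4) :
    LinearMap.range (A14 i).mulVecLin ≤ Submodule.span ℂ {kets i} := by
  rw [A14_eq_smul_outer_kets]
  exact (Matrix.range_mulVecLin_smul_le _ _).trans (Matrix.range_mulVecLin_vecMulVec_le _ _)

/-- `A14` is a POVM whose distinct elements have trivially intersecting ranges
(hence it is intersubjective), yet its coarse-graining into `(I/2, I/2)` is not elementwise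
sharp: the positive operator `I/4` is below both elements `I/2` but nonzero. -/
theorem qubit_intersubjective_but_coarse_graining_not_sharp :
    (∀ i, (A14 i).PosSemidef) ∧ (∑ i, A14 i = 1) ∧
      (∀ i j, i ≠ j →
        LinearMap.range (A14 i).mulVecLin ⊓ LinearMap.range (A14 j).mulVecLin = ⊥) ∧
      (A14 0 + A14 1 = (1 / 2 : ℝ) • (1 : Matrix (Fin 2) (Fin 2) ℂ)) ∧
      (A14 2 + A14 3 = (1 / 2 : ℝ) • (1 : Matrix (Fin 2) (Fin 2) ℂ)) ∧
      ((1 / 4 : ℝ) • (1 : Matrix (Fin 2) (Fin 2) ℂ)).PosSemidef ∧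
      ((1 / 2 : ℝ) • (1 : Matrix (Fin 2) (Fin 2) ℂ)
        - (1 / 4 : ℝ) • (1 : Matrix (Fin 2) (Fin 2) ℂ)).PosSemidef ∧
      (1 / 4 : ℝ) • (1 : Matrix (Fin 2) (Fin 2) ℂ) ≠ 0 := by
  have hcomputational : A14 0 + A14 1 = (1 / 2 : ℝ) • (1 : Matrix (Fin 2) (Fin 2) ℂ) := by
    rw [A14_eq_smul_outer_kets, A14_eq_smul_outer_kets, ← smul_add]
    exact congrArg _ outer_ketZero_add_outer_ketOne
  have hdiagonal : A14 2 + A14 3 = (1 / 2 : ℝ) • (1 : Matrix (Fin 2) (Fin 2) ℂ) := by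
    rw [A14_eq_smul_outer_kets, A14_eq_smul_outer_kets, ← smul_add]
    exact congrArg _ outer_ketPlus_add_outer_ketMinus
  have hquarter : ((1 / 4 : ℝ) • (1 : Matrix (Fin 2) (Fin 2) ℂ)).PosSemidef :=
    Matrix.PosSemidef.one.smul (by norm_num)
  refine ⟨fun i => ?_, ?_, fun i j hij => ?_, hcomputational, hdiagonal, hquarter, ?_,
    smul_ne_zero (by norm_num) one_ne_zero⟩
  · rw [A14_eq_smul_outer_kets]
    exact (Matrix.posSemidef_vecMulVec_self_star _).smul (by norm_num)
  · rw [Fin.sum_univ_four, add_assoc, hcomputational, hdiagonal, ← add_smul]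
    norm_num
  · exact le_bot_iff.mp <| (inf_le_inf (range_A14_le_span_kets i) (range_A14_le_span_kets j)).trans
      (span_singleton_inf_span_singleton_eq_bot_of_det_ne_zero (kets_det_ne_zero hij)).le
  · rwa [← sub_smul, show (1 / 2 : ℝ) - 1 / 4 = 1 / 4 by norm_num]
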